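/- arXiv:1501.01357 — 2 statements merged into one kernel-verified Lean document; each statement's English description precedes it below -/
import Mathlib

section
/- A differential character is determined by its curvature up to a character with zero curvature: if f, g ∈ Ĥ^k(X; ℝ/A) have δ₁(f) = δ₁(g), then f − g = i₁(u) for some u ∈ H^{k-1}(X; ℝ/A). -/
/-- An abstract model of the complex of smooth singular chains and of smooth
differential forms on a smooth manifold `X`, together with integration of forms
over chains, the exterior derivative and Stokes' theorem.  This is exactly the
structure needed to define Cheeger--Simons differential characters. -/
structure ChainFormSetup where
  /-- smooth singular `k`-chains -/
  Chain : ℕ → Type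
  [chainGroup : ∀ k, AddCommGroup (Chain k)]
  /-- smooth differential `k`-forms -/
  Form : ℕ → Type
  [formGroup : ∀ k, AddCommGroup (Form k)]
  /-- the boundary operator on smooth singular chains -/
  boundary : ∀ k, Chain (k + 1) →+ Chain k
  boundary_boundary : ∀ k (c : Chain (k + 2)), boundary k (boundary (k + 1) c) = 0
  /-- integration of a `k`-form over a smooth singular `k`-chain -/
  integ : ∀ k, Form k →+ Chain k →+ ℝ
  /-- the exterior derivative -/
  d : ∀ k, Form k →+ Form (k + 1)
  d_d : ∀ k (ω : Form k), d (k + 1) (d k ω) = 0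
  /-- Stokes' theorem -/
  stokes : ∀ k (ω : Form k) (c : Chain (k + 1)),
    integ (k + 1) (d k ω) c = integ k ω (boundary k c)

attribute [instance] ChainFormSetup.chainGroup ChainFormSetup.formGroup

namespace ChainFormSetup

variable (S : ChainFormSetup)

/-- the group of smooth singular `k`-cycles `Z_k(X)` -/
def Cycle : ∀ k, AddSubgroup (S.Chain k)
  | 0 => ⊤
  | (k + 1) => (S.boundary k).ker

theorem boundary_mem_cycle (k : ℕ) (c : S.Chain (k + 1)) :
    S.boundary k c ∈ S.Cycle k := by
  cases k with
  | zero => exact AddSubgroup.mem_top _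
  | succ k => exact AddMonoidHom.mem_ker.mpr (S.boundary_boundary k c)

/-- the boundary of a `(k+1)`-chain, viewed as a `k`-cycle -/
def boundaryCycle (k : ℕ) : S.Chain (k + 1) →+ S.Cycle k where
  toFun c := ⟨S.boundary k c, S.boundary_mem_cycle k c⟩
  map_zero' := by ext; simp
  map_add' c₁ c₂ := by ext; simp

/-- reduction of a real number modulo the subring `A ⊂ ℝ`, with values in `ℝ/A` -/
def modA (A : Subring ℝ) : ℝ →+ ℝ ⧸ A.toAddSubgroup :=
  QuotientAddGroup.mk' A.toAddSubgroup

/-- A degree `k+1` Cheeger--Simons differential character with coefficients in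
`ℝ/A`: a group homomorphism on smooth singular `k`-cycles together with a
curvature form `curv` such that `f(∂c) = ∫_c curv mod A` for every `(k+1)`-chain
`c`. -/
structure DiffChar (A : Subring ℝ) (k : ℕ) where
  toFun : S.Cycle k →+ ℝ ⧸ A.toAddSubgroup
  curv : S.Form (k + 1)
  curv_spec : ∀ c : S.Chain (k + 1),
    toFun (S.boundaryCycle k c) = modA A (S.integ (k + 1) curv c)

variable {S}

instance (A : Subring ℝ) (k : ℕ) : Zero (S.DiffChar A k) :=
  ⟨{ toFun := 0
     curv := 0
     curv_spec := by simp [modA] }⟩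

instance (A : Subring ℝ) (k : ℕ) : Add (S.DiffChar A k) :=
  ⟨fun f g =>
    { toFun := f.toFun + g.toFun
      curv := f.curv + g.curv
      curv_spec := by simp [f.curv_spec, g.curv_spec] }⟩

instance (A : Subring ℝ) (k : ℕ) : Neg (S.DiffChar A k) :=
  ⟨fun f =>
    { toFun := -f.toFun
      curv := -f.curv
      curv_spec := by simp [f.curv_spec] }⟩

instance (A : Subring ℝ) (k : ℕ) : Sub (S.DiffChar A k) :=
  ⟨fun f g =>
    { toFun := f.toFun - g.toFun
      curv := f.curv - g.curv
      curv_spec := by simp [f.curv_spec, g.curv_spec, sub_eq_add_neg] }⟩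

variable (S)

/-- `Ω^k_A(X)`: the property of being a closed `k`-form all of whose periods lie
in the subring `A`. -/
def IsClosedWithPeriodsIn (A : Subring ℝ) {k : ℕ} (ω : S.Form k) : Prop :=
  S.d k ω = 0 ∧ ∀ z : S.Cycle k, S.integ k ω z ∈ A

/-- `i₂`: the differential character determined by integration of a `k`-form
against `k`-cycles, with curvature `dα`. -/
def i2 (A : Subring ℝ) {k : ℕ} (α : S.Form k) : S.DiffChar A k where
  toFun := (modA A).comp ((S.integ k α).comp (S.Cycle k).subtype)
  curv := S.d k α
  curv_spec c := by simp [modA, boundaryCycle, S.stokes]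

end ChainFormSetup

namespace ChainFormSetup

variable (S : ChainFormSetup)

/-- the subgroup of boundaries inside the group of `k`-cycles -/
def boundarySubgroup (k : ℕ) : AddSubgroup (S.Cycle k) := (S.boundaryCycle k).range

/-- smooth singular homology `H_k(X; ℤ)` -/
def Homology (k : ℕ) := S.Cycle k ⧸ S.boundarySubgroup k

instance (k : ℕ) : AddCommGroup (S.Homology k) :=
  QuotientAddGroup.Quotient.addCommGroup _

/-- the quotient map from cycles onto homology classes -/
def homologyMk (k : ℕ) : S.Cycle k →+ S.Homology k :=
  QuotientAddGroup.mk' _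

end ChainFormSetup

/-! A flat character kills boundaries, since `f(∂c) = ∫_c curv mod A = 0`; hence it descends
to homology. If `f` and `g` have the same curvature, `f - g` is flat. -/

namespace ChainFormSetup

variable {S : ChainFormSetup} {A : Subring ℝ} {k : ℕ}

@[simp]
theorem DiffChar.sub_toFun (f g : S.DiffChar A k) : (f - g).toFun = f.toFun - g.toFun := rfl

@[simp]
theorem DiffChar.sub_curv (f g : S.DiffChar A k) : (f - g).curv = f.curv - g.curv := rfl

theorem DiffChar.boundarySubgroup_le_ker_of_curv_eq_zero (f : S.DiffChar A k)
    (hf : f.curv = 0) : S.boundarySubgroup k ≤ f.toFun.ker := by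
  rintro _ ⟨c, rfl⟩
  rw [AddMonoidHom.mem_ker, f.curv_spec, hf, map_zero, AddMonoidHom.zero_apply, map_zero]

theorem DiffChar.exists_comp_homologyMk_of_curv_eq_zero (f : S.DiffChar A k)
    (hf : f.curv = 0) :
    ∃ u : S.Homology k →+ ℝ ⧸ A.toAddSubgroup, f.toFun = u.comp (S.homologyMk k) :=
  ⟨QuotientAddGroup.lift _ f.toFun (f.boundarySubgroup_le_ker_of_curv_eq_zero hf),
    (QuotientAddGroup.lift_comp_mk' _ _ _).symm⟩

end ChainFormSetup

theorem determined_by_curvature_up_to_i1_general (S : ChainFormSetup) (A : Subring ℝ)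
    (k : ℕ) (f g : S.DiffChar A k) (h : f.curv = g.curv) :
    ∃ u : S.Homology k →+ ℝ ⧸ A.toAddSubgroup,
      f.toFun - g.toFun = u.comp (S.homologyMk k) := by
  have hflat : (f - g).curv = 0 := by rw [ChainFormSetup.DiffChar.sub_curv, h, sub_self]
  simpa only [ChainFormSetup.DiffChar.sub_toFun] using
    (f - g).exists_comp_homologyMk_of_curv_eq_zero hflat

/-- A differential character is determined by its curvature up
to a flat character: if `δ₁(f) = δ₁(g)` then `f − g = i₁(u)` for some
`u ∈ H^k(X; ℝ/A)` (equivalently, by the universal coefficient theorem for the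
divisible group `ℝ/A`, a homomorphism on homology). -/
theorem determined_by_curvature_up_to_i1 (S : ChainFormSetup) (A : Subring ℝ)
    (hA : A ≠ ⊤) (k : ℕ) (f g : S.DiffChar A k) (h : f.curv = g.curv) :
    ∃ u : S.Homology k →+ ℝ ⧸ A.toAddSubgroup,
      f.toFun - g.toFun = u.comp (S.homologyMk k) :=
  determined_by_curvature_up_to_i1_general S A k f g h
end

section
/- Uniqueness characterization underlying Bismut's theorem (formal version): suppose Φ and Ψ are assignments, to every geometric family (proper spin^c submersion with Hermitian bundle data) ξ over base B, of classes Φ(ξ), Ψ(ξ) ∈ Ĥ^{even}(B; ℝ/ℚ), both natural under pullback along smooth maps f: B̃ → B (i.e., Φ(f*ξ) = f*Φ(ξ) and likewise for Ψ) and with equal curvatures δ₁(Φ(ξ)) = δ₁(Ψ(ξ)) for all ξ. If every natural assignment of flat (curvature zero) even differential characters to such families vanishes, then Φ = Ψ. Applying this to Φ(ξ) = ∫̂_{X/B} Todd̂ ∗ cĥ(E,∇) − cĥ(ker D^E, ∇^{ker D^E}) and Ψ(ξ) = i₂(η̃(ℰ)) yields Bismut's identity cĥ(ker D^E, ∇^{ker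 D^E}) + i₂(η̃(ℰ)) = ∫̂_{X/B} Todd̂(T^V X, ∇̂^{T^V X}) ∗ cĥ(E, ∇^E). -/
namespace ChainFormSetup

/-- The pushforward on smooth singular chains and pullback on differential forms
induced by a smooth map `φ : Y → X`, where `S` models the manifold `X` and `T`
models the manifold `Y`; compatible with boundaries, exterior derivatives and
integration (change of variables). -/
structure SetupMap (S T : ChainFormSetup) where
  /-- the pushforward `φ_*` on smooth singular chains -/
  chainMap : ∀ k, T.Chain k →+ S.Chain k
  chainMap_boundary : ∀ k (c : T.Chain (k + 1)),
    chainMap k (T.boundary k c) = S.boundary k (chainMap (k + 1) c)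
  /-- the pullback `φ^*` on differential forms -/
  formPull : ∀ k, S.Form k →+ T.Form k
  formPull_d : ∀ k (ω : S.Form k), T.d k (formPull k ω) = formPull (k + 1) (S.d k ω)
  integ_pull : ∀ k (ω : S.Form k) (c : T.Chain k),
    S.integ k ω (chainMap k c) = T.integ k (formPull k ω) c

variable {S T U : ChainFormSetup}

theorem SetupMap.chainMap_mem_cycle (φ : SetupMap S T) (k : ℕ) (z : T.Cycle k) :
    φ.chainMap k (z : T.Chain k) ∈ S.Cycle k := by
  cases k with
  | zero => exact AddSubgroup.mem_top _
  | succ k =>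
      refine AddMonoidHom.mem_ker.mpr ?_
      rw [← φ.chainMap_boundary k z]
      have hz : T.boundary k (z : T.Chain (k + 1)) = 0 := AddMonoidHom.mem_ker.mp z.2
      rw [hz, map_zero]

/-- the induced pushforward on cycles -/
def SetupMap.cycleMap (φ : SetupMap S T) (k : ℕ) : T.Cycle k →+ S.Cycle k where
  toFun z := ⟨φ.chainMap k z, φ.chainMap_mem_cycle k z⟩
  map_zero' := by ext; simp
  map_add' z₁ z₂ := by ext; simp

/-- pullback of differential characters along a smooth map:
`(φ^*f)(z) = f(φ_* z)`, with curvature `φ^*(curv f)`. -/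
def SetupMap.pull (φ : SetupMap S T) {A : Subring ℝ} {k : ℕ}
    (f : S.DiffChar A k) : T.DiffChar A k where
  toFun := f.toFun.comp (φ.cycleMap k)
  curv := φ.formPull (k + 1) f.curv
  curv_spec c := by
    have h1 : (φ.cycleMap k) (T.boundaryCycle k c) =
        S.boundaryCycle k (φ.chainMap (k + 1) c) := by
      ext
      simp [cycleMap, boundaryCycle, φ.chainMap_boundary]
    rw [AddMonoidHom.comp_apply, h1, f.curv_spec, φ.integ_pull]

/-- the setup map induced by the identity map -/
def SetupMap.id (S : ChainFormSetup) : SetupMap S S where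
  chainMap k := AddMonoidHom.id _
  chainMap_boundary k c := rfl
  formPull k := AddMonoidHom.id _
  formPull_d k ω := rfl
  integ_pull k ω c := rfl

/-- composition of setup maps, corresponding to composition of smooth maps -/
def SetupMap.comp (ψ : SetupMap S T) (φ : SetupMap T U) : SetupMap S U where
  chainMap k := (ψ.chainMap k).comp (φ.chainMap k)
  chainMap_boundary k c := by
    simp [AddMonoidHom.comp_apply, φ.chainMap_boundary, ψ.chainMap_boundary]
  formPull k := (φ.formPull k).comp (ψ.formPull k)
  formPull_d k ω := by
    simp [AddMonoidHom.comp_apply, φ.formPull_d, ψ.formPull_d]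
  integ_pull k ω c := by
    simp [AddMonoidHom.comp_apply, ψ.integ_pull, φ.integ_pull]

end ChainFormSetup

/-- `ℚ` regarded as a (proper) subring of `ℝ`. -/
noncomputable def ratSub : Subring ℝ := (Rat.castHom ℝ).range

/-- An abstract site of geometric families (proper submersions with closed
`spin^c` fibers of even relative dimension equipped with all the geometric data,
together with Hermitian bundles with unitary connections whose fiberwise Dirac
kernels form superbundles).  `Hom ξ η` is the type of smooth maps `f` between
the bases with `ξ = f^*η`; `baseMap` records the induced chain/form maps. -/
structure GeomSite where
  /-- geometric families -/
  Fam : Type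
  /-- the base manifold of a family -/
  Base : Fam → ChainFormSetup
  /-- smooth maps of bases realizing the first family as pullback of the second -/
  Hom : Fam → Fam → Type
  /-- the induced maps on chains and forms of the bases -/
  baseMap : ∀ {ξ η : Fam}, Hom ξ η → ChainFormSetup.SetupMap (Base η) (Base ξ)

/-- Naturality of an assignment of even-degree differential characters
(`Ĥ^{2m+2}(Base ξ; ℝ/A)` corresponds to `DiffChar A (2m+1)`) to geometric
families: compatibility with pullback. -/
def GeomSite.Natural (G : GeomSite) (A : Subring ℝ)
    (F : ∀ ξ : G.Fam, ∀ m : ℕ, (G.Base ξ).DiffChar A (2 * m + 1)) : Prop :=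
  ∀ ⦃ξ η : G.Fam⦄ (φ : G.Hom ξ η) (m : ℕ),
    F ξ m = (G.baseMap φ).pull (F η m)


namespace ChainFormSetup

variable {S T : ChainFormSetup} {A : Subring ℝ} {k : ℕ}

namespace DiffChar

@[ext]
theorem ext {f g : S.DiffChar A k} (hfun : f.toFun = g.toFun) (hcurv : f.curv = g.curv) :
    f = g := by
  cases f; cases g; simp_all

@[simp] theorem zero_toFun : (0 : S.DiffChar A k).toFun = 0 := rfl
@[simp] theorem zero_curv : (0 : S.DiffChar A k).curv = 0 := rfl
@[simp] theorem add_toFun (f g : S.DiffChar A k) : (f + g).toFun = f.toFun + g.toFun := rfl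
@[simp] theorem add_curv (f g : S.DiffChar A k) : (f + g).curv = f.curv + g.curv := rfl
@[simp] theorem sub_curv_s18 (f g : S.DiffChar A k) : (f - g).curv = f.curv - g.curv := rfl

instance : SMul ℕ (S.DiffChar A k) :=
  ⟨fun n f =>
    { toFun := n • f.toFun
      curv := n • f.curv
      curv_spec c := by
        change n • f.toFun _ = _
        rw [f.curv_spec, map_nsmul, AddMonoidHom.nsmul_apply, map_nsmul] }⟩

instance : SMul ℤ (S.DiffChar A k) :=
  ⟨fun n f =>
    { toFun := n • f.toFun
      curv := n • f.curv
      curv_spec c := by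
        change n • f.toFun _ = _
        rw [f.curv_spec, map_zsmul, AddMonoidHom.zsmul_apply, map_zsmul] }⟩

def toProd (f : S.DiffChar A k) : (S.Cycle k →+ ℝ ⧸ A.toAddSubgroup) × S.Form (k + 1) :=
  (f.toFun, f.curv)

theorem toProd_injective : Function.Injective (toProd : S.DiffChar A k → _) :=
  fun _ _ h => ext (congrArg Prod.fst h) (congrArg Prod.snd h)

instance : AddCommGroup (S.DiffChar A k) :=
  toProd_injective.addCommGroup _ rfl (fun _ _ => rfl) (fun _ => rfl) (fun _ _ => rfl)
    (fun _ _ => rfl) (fun _ _ => rfl)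

end DiffChar

@[simp] theorem i2_curv (α : S.Form k) : (S.i2 A α).curv = S.d k α := rfl

theorem i2_toFun_apply (α : S.Form k) (z : S.Cycle k) :
    (S.i2 A α).toFun z = modA A (S.integ k α z) := rfl

theorem integ_d_cycle (β : S.Form k) (z : S.Cycle (k + 1)) :
    S.integ (k + 1) (S.d k β) z = 0 := by
  rw [S.stokes, AddMonoidHom.mem_ker.mp z.2, map_zero]

theorem i2_add_d (α : S.Form (k + 1)) (β : S.Form k) :
    S.i2 A (α + S.d k β) = S.i2 A α := by
  ext z
  · simp only [i2_toFun_apply, map_add, AddMonoidHom.add_apply, integ_d_cycle, add_zero]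
  · simp only [i2_curv, map_add, S.d_d, add_zero]

namespace SetupMap

def pullHom (φ : SetupMap S T) : S.DiffChar A k →+ T.DiffChar A k where
  toFun := φ.pull
  map_zero' := by ext <;> simp [pull]
  map_add' f g := by ext <;> simp [pull]

@[simp] theorem pullHom_apply (φ : SetupMap S T) (f : S.DiffChar A k) :
    φ.pullHom f = φ.pull f := rfl

theorem pull_i2 (φ : SetupMap S T) (α : S.Form k) :
    φ.pull (S.i2 A α) = T.i2 A (φ.formPull k α) := by
  ext z
  · exact congrArg (modA A) (φ.integ_pull k α z)
  · exact (φ.formPull_d k α).symm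

end SetupMap

end ChainFormSetup

namespace GeomSite

variable {G : GeomSite} {A : Subring ℝ}
  {F F' : ∀ ξ : G.Fam, ∀ m : ℕ, (G.Base ξ).DiffChar A (2 * m + 1)}

theorem Natural.add (hF : G.Natural A F) (hF' : G.Natural A F') :
    G.Natural A (fun ξ m => F ξ m + F' ξ m) := by
  intro ξ η φ m
  simp only [hF φ m, hF' φ m, ← ChainFormSetup.SetupMap.pullHom_apply, map_add]

theorem Natural.sub (hF : G.Natural A F) (hF' : G.Natural A F') :
    G.Natural A (fun ξ m => F ξ m - F' ξ m) := by
  intro ξ η φ m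
  simp only [hF φ m, hF' φ m, ← ChainFormSetup.SetupMap.pullHom_apply, map_sub]

theorem natural_i2 {eta : ∀ ξ : G.Fam, ∀ m : ℕ, (G.Base ξ).Form (2 * m + 1)}
    (heta : ∀ ⦃ξ η : G.Fam⦄ (φ : G.Hom ξ η) (m : ℕ), ∃ β : (G.Base ξ).Form (2 * m),
      (G.baseMap φ).formPull (2 * m + 1) (eta η m) = eta ξ m + (G.Base ξ).d (2 * m) β) :
    G.Natural A (fun ξ m => (G.Base ξ).i2 A (eta ξ m)) := by
  intro ξ η φ m
  obtain ⟨β, hβ⟩ := heta φ m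
  rw [ChainFormSetup.SetupMap.pull_i2, hβ, ChainFormSetup.i2_add_d]

theorem eq_of_natural_of_curv_eq
    (hflat : ∀ H : ∀ ξ : G.Fam, ∀ m : ℕ, (G.Base ξ).DiffChar A (2 * m + 1),
      G.Natural A H → (∀ ξ m, (H ξ m).curv = 0) → ∀ ξ m, H ξ m = 0)
    (hF : G.Natural A F) (hF' : G.Natural A F') (hcurv : ∀ ξ m, (F ξ m).curv = (F' ξ m).curv)
    (ξ : G.Fam) (m : ℕ) : F ξ m = F' ξ m :=
  sub_eq_zero.mp <| hflat _ (hF.sub hF') (fun ξ m => by simp [hcurv]) ξ m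

end GeomSite

/-- Uniqueness characterization underlying Bismut's theorem:
if `toddCh = ∫̂ Todd̂ ∗ cĥ(E,∇)` and `chKer = cĥ(ker D^E, ∇^{ker D^E})` are
natural assignments of even differential characters, the Bismut--Cheeger eta
forms `eta` are natural up to exact forms and satisfy the local family index
theorem `d η̃ = δ₁(toddCh) − δ₁(chKer)`, and every natural assignment of flat
even characters vanishes, then Bismut's identity holds:
`cĥ(ker D^E, ∇^{ker D^E}) + i₂(η̃(ℰ)) = ∫̂_{X/B} Todd̂ ∗ cĥ(E, ∇^E)`. -/
theorem bismut_index_theorem (G : GeomSite)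
    (toddCh chKer : ∀ ξ : G.Fam, ∀ m : ℕ, (G.Base ξ).DiffChar ratSub (2 * m + 1))
    (eta : ∀ ξ : G.Fam, ∀ m : ℕ, (G.Base ξ).Form (2 * m + 1))
    (hT : G.Natural ratSub toddCh) (hK : G.Natural ratSub chKer)
    (heta : ∀ ⦃ξ η : G.Fam⦄ (φ : G.Hom ξ η) (m : ℕ),
      ∃ β : (G.Base ξ).Form (2 * m),
        (G.baseMap φ).formPull (2 * m + 1) (eta η m) =
          eta ξ m + (G.Base ξ).d (2 * m) β)
    (hLFIT : ∀ ξ m,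
      (G.Base ξ).d (2 * m + 1) (eta ξ m) = (toddCh ξ m).curv - (chKer ξ m).curv)
    (hflat : ∀ H : ∀ ξ : G.Fam, ∀ m : ℕ, (G.Base ξ).DiffChar ratSub (2 * m + 1),
      G.Natural ratSub H → (∀ ξ m, (H ξ m).curv = 0) → ∀ ξ m, H ξ m = 0) :
    ∀ ξ m, chKer ξ m + (G.Base ξ).i2 ratSub (eta ξ m) = toddCh ξ m :=
  GeomSite.eq_of_natural_of_curv_eq hflat (hK.add (GeomSite.natural_i2 heta)) hT
    fun ξ m => by simp [hLFIT]
end
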